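/- Define W(t,x) := 1 + (1/2)·((ζ_{2,d}(t)+x₂)/(1+(ζ_{1,d}(t)+x₁)²))² + F(arctan(ζ_{1,d}(t)+x₁)) for t ≥ 0, x ∈ ℝ², let G̃ := sup{ G(q, q̇) : (q, q̇) ∈ (−π/2,π/2)×ℝ }, and set c := 1/2 + G̃²·sup_{t ≥ −τ} v_d(t)². Then W : [0,∞)×ℝ² → [1,∞) is C² and for all t ≥ 0, x ∈ ℝ² and u ∈ ℝ: ∂W/∂t(t,x) + ∂W/∂x₁(t,x)·x₂ + ∂W/∂x₂(t,x)·(f̃(t,x) + g̃(t,x)u) ≤ c·W(t,x) + G̃²u². -/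

import Mathlib

/-!
In the coordinates `ζ = (tan q, q̇ / cos² q)` the function `W(t, x)` is the mechanical energy
`1 + q̇² / 2 + F(q)` of the state `ζ_d(t) + x`, and the error dynamics `(x₂, f̃ + g̃ u)` plus the
reference dynamics `ζ̇_d = (ζ_{2,d}, g₁(ζ_d) + g₂(ζ_d) v_d(t - τ))` is the NMES vector field at
`ζ_d(t) + x` with input `v_d(t - τ) + u`. The left-hand side of the dissipation inequality is
therefore the power `-q̇ H(q̇) + q̇ G(q, q̇) (v_d(t - τ) + u)`, which Young's inequality bounds.
Since `ζ_d` solves an ODE with a `C¹` right-hand side, it is `C²`, and so is `W`.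
-/

open Set Real Filter

noncomputable def vec2 (a b : ℝ) : EuclideanSpace ℝ (Fin 2) :=
  (WithLp.equiv 2 (Fin 2 → ℝ)).symm ![a, b]

noncomputable def g1f (F H : ℝ → ℝ) (ζ : EuclideanSpace ℝ (Fin 2)) : ℝ :=
  -(1 + (ζ 0) ^ 2) * deriv F (Real.arctan (ζ 0))
    + (2 * ζ 0 / (1 + (ζ 0) ^ 2)) * (ζ 1) ^ 2
    - (1 + (ζ 0) ^ 2) * H (ζ 1 / (1 + (ζ 0) ^ 2))

noncomputable def g2f (G : ℝ → ℝ → ℝ) (ζ : EuclideanSpace ℝ (Fin 2)) : ℝ :=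
  (1 + (ζ 0) ^ 2) * G (Real.arctan (ζ 0)) (ζ 1 / (1 + (ζ 0) ^ 2))

local notation "ℝ²" => EuclideanSpace ℝ (Fin 2)

section ODERegularity

variable {E : Type*} [NormedAddCommGroup E] [NormedSpace ℝ E] {s : Set ℝ}

theorem contDiffOn_succ_of_hasDerivWithinAt {n : ℕ} {f f' : ℝ → E} (hs : UniqueDiffOn ℝ s)
    (hf : ∀ t ∈ s, HasDerivWithinAt f (f' t) s t) (hf' : ContDiffOn ℝ n f' s) :
    ContDiffOn ℝ (n + 1) f s :=
  (contDiffOn_succ_iff_derivWithin hs).2 ⟨fun t ht => (hf t ht).differentiableWithinAt,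
    by simp, hf'.congr fun t ht => (hf t ht).derivWithin (hs t ht)⟩

theorem contDiffOn_two_of_hasDerivWithinAt_field {γ : ℝ → E} {X : ℝ × E → E}
    (hs : UniqueDiffOn ℝ s) (hX : ContDiffOn ℝ 1 X (s ×ˢ univ))
    (hγ : ∀ t ∈ s, HasDerivWithinAt γ (X (t, γ t)) s t) : ContDiffOn ℝ 2 γ s := by
  have hgraph : MapsTo (fun t => (t, γ t)) s (s ×ˢ univ) := fun t ht => ⟨ht, trivial⟩
  have hγ₀ : ContDiffOn ℝ (0 : ℕ) γ s :=
    contDiffOn_zero.2 fun t ht => (hγ t ht).continuousWithinAt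
  have hγ₁ : ContDiffOn ℝ 1 γ s := contDiffOn_succ_of_hasDerivWithinAt (n := 0) hs hγ
    ((hX.of_le (by norm_num)).comp (contDiffOn_id.prodMk hγ₀) hgraph)
  exact contDiffOn_succ_of_hasDerivWithinAt (n := 1) hs hγ
    (hX.comp (contDiffOn_id.prodMk hγ₁) hgraph)

end ODERegularity

theorem vec2_eq_smul_add_smul (a b : ℝ) :
    vec2 a b = a • EuclideanSpace.single 0 1 + b • EuclideanSpace.single 1 1 := by
  ext i; fin_cases i <;> simp [vec2]

theorem vec2_apply_zero (a b : ℝ) : vec2 a b 0 = a := rfl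
theorem vec2_apply_one (a b : ℝ) : vec2 a b 1 = b := rfl

theorem HasDerivAt.vec2 {a b : ℝ → ℝ} {a' b' t : ℝ} (ha : HasDerivAt a a' t)
    (hb : HasDerivAt b b' t) : HasDerivAt (fun s => vec2 (a s) (b s)) (vec2 a' b') t := by
  simp only [vec2_eq_smul_add_smul]
  exact (ha.smul_const _).add (hb.smul_const _)

theorem ContDiff.vec2 {E : Type*} [NormedAddCommGroup E] [NormedSpace ℝ E] {n : WithTop ℕ∞}
    {a b : E → ℝ} (ha : ContDiff ℝ n a) (hb : ContDiff ℝ n b) :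
    ContDiff ℝ n (fun p => vec2 (a p) (b p)) := by
  simp only [vec2_eq_smul_add_smul]
  exact (ha.smul contDiff_const).add (hb.smul contDiff_const)

noncomputable def zetaField (F H : ℝ → ℝ) (G : ℝ → ℝ → ℝ) (z : ℝ²) (w : ℝ) : ℝ² :=
  vec2 (z 1) (g1f F H z + g2f G z * w)

noncomputable def energy (F : ℝ → ℝ) (z : ℝ²) : ℝ :=
  1 + 1 / 2 * (z 1 / (1 + z 0 ^ 2)) ^ 2 + F (arctan (z 0))

section NMES

variable {F H : ℝ → ℝ} {G : ℝ → ℝ → ℝ}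

theorem one_add_tan_sq_eq {q : ℝ} (hq : cos q ≠ 0) : 1 + tan q ^ 2 = (cos q ^ 2)⁻¹ := by
  rw [← inv_one_add_tan_sq hq, inv_inv]

theorem hasDerivAt_tan_comp {q : ℝ → ℝ} {q' t : ℝ} (hq : cos (q t) ≠ 0)
    (hd : HasDerivAt q q' t) : HasDerivAt (fun s => tan (q s)) (q' / cos (q t) ^ 2) t := by
  simpa [Function.comp_def, div_eq_inv_mul] using (hasDerivAt_tan hq).comp t hd

theorem hasDerivAt_div_cos_sq {q q' : ℝ → ℝ} {t q'' w : ℝ}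
    (hq : q t ∈ Ioo (-(π / 2)) (π / 2)) (hq' : HasDerivAt q (q' t) t) (hq'' : HasDerivAt q' q'' t)
    (hode : q'' = -deriv F (q t) - H (q' t) + G (q t) (q' t) * w) :
    HasDerivAt (fun s => q' s / cos (q s) ^ 2)
      (g1f F H (vec2 (tan (q t)) (q' t / cos (q t) ^ 2))
        + g2f G (vec2 (tan (q t)) (q' t / cos (q t) ^ 2)) * w) t := by
  have hc : cos (q t) ≠ 0 := (cos_pos_of_mem_Ioo hq).ne'
  refine (hq''.div (hq'.cos.pow 2) (pow_ne_zero 2 hc)).congr_deriv ?_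
  have hvel : q' t / cos (q t) ^ 2 / (1 + tan (q t) ^ 2) = q' t := by
    rw [one_add_tan_sq_eq hc]; field_simp
  simp only [g1f, g2f, vec2_apply_zero, vec2_apply_one, Pi.pow_apply]
  rw [arctan_tan hq.1 hq.2, hvel, one_add_tan_sq_eq hc, hode, tan_eq_sin_div_cos]
  field_simp
  ring

theorem hasDerivAt_vec2_tan {q q' : ℝ → ℝ} {t q'' w : ℝ}
    (hq : q t ∈ Ioo (-(π / 2)) (π / 2)) (hq' : HasDerivAt q (q' t) t) (hq'' : HasDerivAt q' q'' t)
    (hode : q'' = -deriv F (q t) - H (q' t) + G (q t) (q' t) * w) :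
    HasDerivAt (fun s => vec2 (tan (q s)) (q' s / cos (q s) ^ 2))
      (zetaField F H G (vec2 (tan (q t)) (q' t / cos (q t) ^ 2)) w) t :=
  (hasDerivAt_tan_comp (cos_pos_of_mem_Ioo hq).ne' hq').vec2
    (hasDerivAt_div_cos_sq hq hq' hq'' hode)

theorem one_add_sq_ne_zero (a : ℝ) : 1 + a ^ 2 ≠ 0 := by positivity

theorem contDiff_g1f (hF : ContDiffOn ℝ 2 F (Ioo (-(π / 2)) (π / 2))) (hH : ContDiff ℝ 1 H) :
    ContDiff ℝ 1 (g1f F H) := by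
  have hden : ContDiff ℝ 1 (fun z : ℝ² => 1 + z 0 ^ 2) := by fun_prop
  have hF' : ContDiff ℝ 1 (fun z : ℝ² => deriv F (arctan (z 0))) := by
    rw [← contDiffOn_univ]
    exact (hF.deriv_of_isOpen isOpen_Ioo (by norm_num)).comp
      (contDiff_arctan.comp (by fun_prop)).contDiffOn fun z _ => arctan_mem_Ioo (z 0)
  have hη : ContDiff ℝ 1 (fun z : ℝ² => z 1 / (1 + z 0 ^ 2)) :=
    (by fun_prop : ContDiff ℝ 1 (fun z : ℝ² => z 1)).div hden fun z => one_add_sq_ne_zero (z 0)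
  have hcurv : ContDiff ℝ 1 (fun z : ℝ² => 2 * z 0 / (1 + z 0 ^ 2) * z 1 ^ 2) :=
    ((by fun_prop : ContDiff ℝ 1 (fun z : ℝ² => 2 * z 0)).div hden
      fun z => one_add_sq_ne_zero (z 0)).mul (by fun_prop)
  exact ((hden.neg.mul hF').add hcurv).sub (hden.mul (hH.comp hη))

theorem contDiff_g2f
    (hG : ContDiffOn ℝ 1 (fun p : ℝ × ℝ => G p.1 p.2) (Ioo (-(π / 2)) (π / 2) ×ˢ univ)) :
    ContDiff ℝ 1 (g2f G) := by
  have hden : ContDiff ℝ 1 (fun z : ℝ² => 1 + z 0 ^ 2) := by fun_prop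
  have hpolar : ContDiff ℝ 1 (fun z : ℝ² => (arctan (z 0), z 1 / (1 + z 0 ^ 2))) :=
    (contDiff_arctan.comp (by fun_prop)).prodMk
      ((by fun_prop : ContDiff ℝ 1 (fun z : ℝ² => z 1)).div hden
        fun z => one_add_sq_ne_zero (z 0))
  rw [← contDiffOn_univ] at hpolar ⊢
  exact hden.contDiffOn.mul (hG.comp hpolar fun z _ => ⟨arctan_mem_Ioo (z 0), trivial⟩)

theorem contDiff_zetaField (hF : ContDiffOn ℝ 2 F (Ioo (-(π / 2)) (π / 2)))
    (hH : ContDiff ℝ 1 H)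
    (hG : ContDiffOn ℝ 1 (fun p : ℝ × ℝ => G p.1 p.2) (Ioo (-(π / 2)) (π / 2) ×ˢ univ)) :
    ContDiff ℝ 1 (fun p : ℝ² × ℝ => zetaField F H G p.1 p.2) :=
  ContDiff.vec2 (by fun_prop) (((contDiff_g1f hF hH).comp contDiff_fst).add
    (((contDiff_g2f hG).comp contDiff_fst).mul contDiff_snd))

theorem contDiffOn_two_of_hasDerivAt_zetaField {s : Set ℝ} {ζ : ℝ → ℝ²} {w : ℝ → ℝ}
    (hF : ContDiffOn ℝ 2 F (Ioo (-(π / 2)) (π / 2))) (hH : ContDiff ℝ 1 H)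
    (hG : ContDiffOn ℝ 1 (fun p : ℝ × ℝ => G p.1 p.2) (Ioo (-(π / 2)) (π / 2) ×ˢ univ))
    (hs : UniqueDiffOn ℝ s) (hw : ContDiffOn ℝ 1 w s)
    (hζ : ∀ t ∈ s, HasDerivAt ζ (zetaField F H G (ζ t) (w t)) t) : ContDiffOn ℝ 2 ζ s :=
  contDiffOn_two_of_hasDerivWithinAt_field hs
    ((contDiff_zetaField hF hH hG).comp_contDiffOn
      (contDiffOn_snd.prodMk (hw.comp contDiffOn_fst fun _ hp => hp.1)))
    fun t ht => (hζ t ht).hasDerivWithinAt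

theorem one_le_energy (hF : ∀ q ∈ Ioo (-(π / 2)) (π / 2), 0 ≤ F q) (z : ℝ²) :
    1 ≤ energy F z := by
  have hFz := hF _ (arctan_mem_Ioo (z 0))
  have hkin : 0 ≤ 1 / 2 * (z 1 / (1 + z 0 ^ 2)) ^ 2 := by positivity
  unfold energy
  linarith

theorem contDiff_energy (hF : ContDiffOn ℝ 2 F (Ioo (-(π / 2)) (π / 2))) :
    ContDiff ℝ 2 (energy F) := by
  have hFarctan : ContDiff ℝ 2 (fun z : ℝ² => F (arctan (z 0))) := by
    rw [← contDiffOn_univ]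
    exact hF.comp (contDiff_arctan.comp (by fun_prop)).contDiffOn
      fun z _ => arctan_mem_Ioo (z 0)
  have hη : ContDiff ℝ 2 (fun z : ℝ² => z 1 / (1 + z 0 ^ 2)) :=
    (by fun_prop : ContDiff ℝ 2 (fun z : ℝ² => z 1)).div (by fun_prop)
      fun z => one_add_sq_ne_zero (z 0)
  exact (contDiff_const.add (contDiff_const.mul (hη.pow 2))).add hFarctan

theorem hasFDerivAt_energy {z : ℝ²} (hF : DifferentiableAt ℝ F (arctan (z 0))) :
    HasFDerivAt (energy F)
      ((-(2 * z 0 * z 1 ^ 2 / (1 + z 0 ^ 2) ^ 3) + deriv F (arctan (z 0)) / (1 + z 0 ^ 2)) •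
          EuclideanSpace.proj (𝕜 := ℝ) (0 : Fin 2) +
        (z 1 / (1 + z 0 ^ 2) ^ 2) • EuclideanSpace.proj (𝕜 := ℝ) (1 : Fin 2)) z := by
  have h0 : HasFDerivAt (fun z : ℝ² => z 0) (EuclideanSpace.proj (𝕜 := ℝ) (0 : Fin 2)) z :=
    (EuclideanSpace.proj (𝕜 := ℝ) (0 : Fin 2)).hasFDerivAt
  have h1 : HasFDerivAt (fun z : ℝ² => z 1) (EuclideanSpace.proj (𝕜 := ℝ) (1 : Fin 2)) z :=
    (EuclideanSpace.proj (𝕜 := ℝ) (1 : Fin 2)).hasFDerivAt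
  have hinv := ((hasDerivAt_pow 2 (z 0)).const_add (1 : ℝ)).inv (one_add_sq_ne_zero (z 0))
  have hη := h1.mul (hinv.comp_hasFDerivAt z h0)
  have hFarctan := (hF.hasDerivAt.comp (z 0) (hasDerivAt_arctan (z 0))).comp_hasFDerivAt z h0
  refine ((((hη.pow 2).const_mul (1 / 2)).const_add 1).add hFarctan).congr_fderiv ?_
  ext v
  simp only [one_div, Pi.mul_apply, Function.comp_apply, Pi.inv_apply, Nat.add_one_sub_one,
    pow_one, nsmul_eq_mul, Nat.cast_ofNat, smul_add, add_apply, smul_apply, PiLp.proj_apply,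
    smul_eq_mul]
  field_simp
  ring

theorem fderiv_energy_zetaField {z : ℝ²} (hF : DifferentiableAt ℝ F (arctan (z 0))) (w : ℝ) :
    fderiv ℝ (energy F) z (zetaField F H G z w) =
      -(z 1 / (1 + z 0 ^ 2) * H (z 1 / (1 + z 0 ^ 2)))
        + z 1 / (1 + z 0 ^ 2) * G (arctan (z 0)) (z 1 / (1 + z 0 ^ 2)) * w := by
  have := one_add_sq_ne_zero (z 0)
  rw [(hasFDerivAt_energy hF).fderiv]
  simp only [zetaField, g1f, g2f, add_apply, smul_apply, PiLp.proj_apply, vec2_apply_zero,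
    vec2_apply_one, smul_eq_mul]
  field_simp
  ring

theorem energy_rate_eq {s : Set ℝ} {ζ : ℝ → ℝ²} {t w u : ℝ} {x : ℝ²}
    (hs : UniqueDiffWithinAt ℝ s t) (hF : DifferentiableAt ℝ F (arctan ((ζ t + x) 0)))
    (hζ : HasDerivAt ζ (zetaField F H G (ζ t) w) t) :
    derivWithin (fun s => energy F (ζ s + x)) s t
        + fderiv ℝ (fun y => energy F (ζ t + y)) x (EuclideanSpace.single 0 1) * x 1
        + fderiv ℝ (fun y => energy F (ζ t + y)) x (EuclideanSpace.single 1 1)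
          * (g1f F H (ζ t + x) - g1f F H (ζ t) + (g2f G (ζ t + x) - g2f G (ζ t)) * w
            + g2f G (ζ t + x) * u)
      = fderiv ℝ (energy F) (ζ t + x) (zetaField F H G (ζ t + x) (w + u)) := by
  have hV := hasFDerivAt_energy hF
  have hrate := (hV.comp_hasDerivAt t (hζ.add_const x)).hasDerivWithinAt (s := s)
  rw [fderiv_comp_add_left, show derivWithin (fun s => energy F (ζ s + x)) s t = _ from
    hrate.derivWithin hs, hV.fderiv]
  simp only [PiLp.add_apply, zetaField, add_apply, smul_apply, PiLp.proj_apply, vec2_apply_zero,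
    vec2_apply_one, smul_eq_mul, PiLp.single_eq_same, ne_eq, one_ne_zero, zero_ne_one,
    not_false_eq_true, PiLp.single_eq_of_ne, mul_one, mul_zero, add_zero, zero_add]
  ring

theorem damped_supply_le {η h g Gt v S u Φ : ℝ} (hh : 0 ≤ η * h) (hg : 0 < g) (hgGt : g ≤ Gt)
    (hv : v ^ 2 ≤ S) (hΦ : 0 ≤ Φ) :
    -(η * h) + η * g * (v + u)
      ≤ (1 / 2 + Gt ^ 2 * S) * (1 + 1 / 2 * η ^ 2 + Φ) + Gt ^ 2 * u ^ 2 := by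
  have hg2 : g ^ 2 ≤ Gt ^ 2 := pow_le_pow_left₀ hg.le hgGt 2
  have hS : 0 ≤ S := (sq_nonneg v).trans hv
  have hgv : g ^ 2 * v ^ 2 ≤ Gt ^ 2 * S := mul_le_mul hg2 hv (sq_nonneg v) (sq_nonneg Gt)
  have hyv : η * g * v ≤ 1 / 2 * η ^ 2 * (Gt ^ 2 * S) + 1 / 2 := by
    nlinarith [sq_nonneg (η * g * v - 1), mul_le_mul_of_nonneg_left hgv (sq_nonneg η)]
  have hyu : η * g * u ≤ 1 / 4 * η ^ 2 + Gt ^ 2 * u ^ 2 := by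
    nlinarith [sq_nonneg (η - 2 * (g * u)), mul_le_mul_of_nonneg_right hg2 (sq_nonneg u)]
  nlinarith [mul_nonneg (mul_nonneg (sq_nonneg Gt) hS) hΦ, mul_nonneg (sq_nonneg Gt) hS]
end NMES

theorem stmt_11
    (F H : ℝ → ℝ) (G : ℝ → ℝ → ℝ) (τ : ℝ)
    (hF : ContDiffOn ℝ 2 F (Ioo (-(π / 2)) (π / 2)))
    (hFnn : ∀ q ∈ Ioo (-(π / 2)) (π / 2), 0 ≤ F q)
    (hH : ContDiff ℝ 1 H) (hHpos : ∀ y : ℝ, 0 ≤ y * H y)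
    (hG : ContDiffOn ℝ 1 (fun p : ℝ × ℝ => G p.1 p.2) (Ioo (-(π / 2)) (π / 2) ×ˢ univ))
    (hGpos : ∀ q ∈ Ioo (-(π / 2)) (π / 2), ∀ y : ℝ, 0 < G q y)
    (hGbdd : BddAbove {z : ℝ | ∃ q ∈ Ioo (-(π / 2)) (π / 2), ∃ y : ℝ, z = G q y})
    -- the reference signal
    (q_d qd' qd'' v_d vd' : ℝ → ℝ)
    (hqdmem : ∀ t ≥ (0:ℝ), q_d t ∈ Ioo (-(π / 2)) (π / 2))
    (hqdD : ∀ t ≥ (0:ℝ), HasDerivAt q_d (qd' t) t ∧ HasDerivAt qd' (qd'' t) t)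
    (hvdD : ∀ t ≥ -τ, HasDerivAt v_d (vd' t) t) (hvdc : ContinuousOn vd' (Ici (-τ)))
    (hrefODE : ∀ t ≥ (0:ℝ),
      qd'' t = -(deriv F (q_d t)) - H (qd' t) + G (q_d t) (qd' t) * v_d (t - τ))
    -- ζ_d, f̃, g̃
    (ζ1d ζ2d : ℝ → ℝ)
    (hζ1d : ∀ t, ζ1d t = Real.tan (q_d t))
    (hζ2d : ∀ t, ζ2d t = qd' t / Real.cos (q_d t) ^ 2)
    (ftil gtil : ℝ → EuclideanSpace ℝ (Fin 2) → ℝ)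
    (hftil : ∀ t x, ftil t x = g1f F H (vec2 (ζ1d t) (ζ2d t) + x) - g1f F H (vec2 (ζ1d t) (ζ2d t))
      + (g2f G (vec2 (ζ1d t) (ζ2d t) + x) - g2f G (vec2 (ζ1d t) (ζ2d t))) * v_d (t - τ))
    (hgtil : ∀ t x, gtil t x = g2f G (vec2 (ζ1d t) (ζ2d t) + x))
    -- G̃ and c
    (Gt : ℝ) (hGt : Gt = sSup {z : ℝ | ∃ q ∈ Ioo (-(π / 2)) (π / 2), ∃ y : ℝ, z = G q y})
    (hvdsqbdd : BddAbove ((fun t => v_d t ^ 2) '' Ici (-τ)))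
    (c : ℝ) (hc : c = 1 / 2 + Gt ^ 2 * sSup ((fun t => v_d t ^ 2) '' Ici (-τ)))
    -- W
    (W : ℝ → EuclideanSpace ℝ (Fin 2) → ℝ)
    (hWdef : ∀ t x, W t x =
      1 + (1 / 2) * ((ζ2d t + x 1) / (1 + (ζ1d t + x 0) ^ 2)) ^ 2
        + F (Real.arctan (ζ1d t + x 0))) :
    ContDiffOn ℝ 2 (fun p : ℝ × EuclideanSpace ℝ (Fin 2) => W p.1 p.2) (Ici 0 ×ˢ univ) ∧
    (∀ t ≥ (0:ℝ), ∀ x : EuclideanSpace ℝ (Fin 2), 1 ≤ W t x) ∧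
    (∀ t ≥ (0:ℝ), ∀ x : EuclideanSpace ℝ (Fin 2), ∀ u : ℝ,
      derivWithin (fun s => W s x) (Ici 0) t
        + fderiv ℝ (fun y => W t y) x (EuclideanSpace.single 0 1) * x 1
        + fderiv ℝ (fun y => W t y) x (EuclideanSpace.single 1 1) * (ftil t x + gtil t x * u)
      ≤ c * W t x + Gt ^ 2 * u ^ 2) := by
  have hFd : ∀ a, DifferentiableAt ℝ F (arctan a) := fun a =>
    (hF.contDiffAt (isOpen_Ioo.mem_nhds (arctan_mem_Ioo a))).differentiableAt (by norm_num)
  have hζ : ∀ t ≥ (0 : ℝ), HasDerivAt (fun s => vec2 (ζ1d s) (ζ2d s))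
      (zetaField F H G (vec2 (ζ1d t) (ζ2d t)) (v_d (t - τ))) t := fun t ht => by
    simp only [hζ1d, hζ2d]
    exact hasDerivAt_vec2_tan (hqdmem t ht) (hqdD t ht).1 (hqdD t ht).2 (hrefODE t ht)
  have hW : W = fun t x => energy F (vec2 (ζ1d t) (ζ2d t) + x) :=
    funext fun t => funext fun x => hWdef t x
  subst hW
  refine ⟨?_, fun t _ x => one_le_energy hFnn _, fun t ht x u => ?_⟩
  · have hv : ContDiffOn ℝ 1 v_d (Ici (-τ)) := contDiffOn_succ_of_hasDerivWithinAt (n := 0)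
      (uniqueDiffOn_Ici _) (fun t ht => (hvdD t ht).hasDerivWithinAt) (contDiffOn_zero.2 hvdc)
    have hζC2 := contDiffOn_two_of_hasDerivAt_zetaField hF hH hG (uniqueDiffOn_Ici 0)
      (hv.comp (contDiffOn_id.sub contDiffOn_const) fun t ht => by simpa using ht) hζ
    exact (contDiff_energy hF).comp_contDiffOn
      ((hζC2.comp contDiffOn_fst fun p hp => hp.1).add contDiffOn_snd)
  · rw [hftil, hgtil, hc]
    refine (energy_rate_eq (uniqueDiffOn_Ici 0 t ht) (hFd _) (hζ t ht)).trans_le ?_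
    rw [fderiv_energy_zetaField (hFd _)]
    exact damped_supply_le (hHpos _) (hGpos _ (arctan_mem_Ioo _) _)
      (hGt ▸ le_csSup hGbdd ⟨_, arctan_mem_Ioo _, _, rfl⟩)
      (le_csSup hvdsqbdd ⟨t - τ, mem_Ici.2 (by linarith), rfl⟩) (hFnn _ (arctan_mem_Ioo _))
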